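/- If L and L′ are both D-visits from λ in a k-ary tree U, and L is a prefix of L′, and L is D-complete, then L = L′. -/

import Mathlib

/-- A `k`-ary tree: a prefix-closed set of finite lists over colors `< k`,
containing the empty list. -/
def IsKTree (k : ℕ) (U : Set (List ℕ)) : Prop :=
  [] ∈ U ∧ (∀ l ∈ U, ∀ p : List ℕ, p <+: l → p ∈ U) ∧ ∀ l ∈ U, ∀ c ∈ l, c < k

/-- `L` is `D`-complete: every child (in `U`) with color in `D` of a node of `L` is in `L`. -/
def DComplete (U : Set (List ℕ)) (D : List ℕ) (L : List (List ℕ)) : Prop :=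
  ∀ μ ∈ L, ∀ d ∈ D, μ ++ [d] ∈ U → μ ++ [d] ∈ L

/-- `ν` is the `n`-th `d`-expansion of `M`: `ν = μ ++ [d] ∈ U` for some `μ ∈ M`, and exactly
`n` nodes of `M` lexicographically below `μ` have a `d`-child in `U`. -/
def DExpansion (U : Set (List ℕ)) (M : List (List ℕ)) (n d : ℕ) (ν : List ℕ) : Prop :=
  ν ∈ U ∧ ∃ μ ∈ M, ν = μ ++ [d] ∧
    {η | η ∈ M ∧ η ++ [d] ∈ U ∧ List.Lex (· < ·) η μ}.ncard = n

/-- `DVisit U D lam L` : `L` is a `D`-visit of `U` from `lam`. -/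
inductive DVisit (U : Set (List ℕ)) : List ℕ → List ℕ → List (List ℕ) → Prop
  | base (lam : List ℕ) : lam ∈ U → DVisit U [] lam [lam]
  | step (d : ℕ) (D : List ℕ) (lam : List ℕ) (M : List (List ℕ))
      (Ls : List (List (List ℕ))) :
      DVisit U D lam M →
      (1 < Ls.length → DComplete U D M) →
      (∀ j : Fin Ls.length, Ls.get j ≠ []) →
      (∀ j : Fin Ls.length, DExpansion U M j.1 d ((Ls.get j).headI)) →
      (∀ j : Fin Ls.length, DVisit U (D ++ [d]) ((Ls.get j).headI) (Ls.get j)) →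
      (∀ j : Fin Ls.length, j.1 + 1 < Ls.length → DComplete U (d :: D) (Ls.get j)) →
      DVisit U (d :: D) lam (M ++ Ls.flatten)

/-- `U_D(lam)`: the nodes of `U` extending `lam` by a suffix with colors only from `D`. -/
def subtreeD (U : Set (List ℕ)) (D : List ℕ) (lam : List ℕ) : Set (List ℕ) :=
  {μ | μ ∈ U ∧ ∃ η : List ℕ, μ = lam ++ η ∧ ∀ c ∈ η, c ∈ D}

/-- `f` enumerates the complete `D`-visit of `U` from `lam`:
each initial segment `[f 0, …, f m]` is a `D`-visit from `lam`. -/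
def Enumerates (U : Set (List ℕ)) (D lam : List ℕ) (f : ℕ → List ℕ) : Prop :=
  ∀ m : ℕ, DVisit U D lam ((List.range (m + 1)).map f)

/-- `μ` is stable for the enumeration `f`: all later nodes are proper descendants of `μ`. -/
def Stable (f : ℕ → List ℕ) (μ : List ℕ) : Prop :=
  ∃ m, f m = μ ∧ ∀ n, m < n → μ <+: f n ∧ μ ≠ f n

/-- `r` is an infinite branch of the tree `T` (of finite lists): an infinite chain
under the prefix order, downward closed within `T`. -/
def IsInfBranchL (T : Set (List ℕ)) (r : Set (List ℕ)) : Prop :=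
  r ⊆ T ∧ r.Infinite ∧ (∀ μ ∈ r, ∀ ν ∈ r, μ <+: ν ∨ ν <+: μ) ∧
  (∀ μ ∈ r, ∀ η ∈ T, η <+: μ → η ∈ r)

/-!
A `D`-visit lists nodes of `U_D(λ)` only, each once, and a `D`-complete `D`-visit lists all of
`U_D(λ)`; so a node by which a `D`-visit extends a complete one would be listed twice.

For the step `M ++ L₀ ++ ⋯ ++ L_{n-1}` with new color `d ∉ D`, everything rests on the first
occurrence of `d` below `λ`: the nodes of `M` have none, and a node of `L_j` has it right after
the parent `ν ∈ M` of the head `ν ++ [d]` of `L_j`, so it determines the head and hence `j`.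
-/

variable {U : Set (List ℕ)}

lemma subtreeD_mono {D D' lam : List ℕ} (h : D ⊆ D') :
    subtreeD U D lam ⊆ subtreeD U D' lam := by
  rintro μ ⟨hμU, η, rfl, hη⟩
  exact ⟨hμU, η, rfl, fun c hc => h (hη c hc)⟩

lemma prefix_of_mem_subtreeD {D lam μ : List ℕ} (h : μ ∈ subtreeD U D lam) : lam <+: μ := by
  obtain ⟨-, η, rfl, -⟩ := h
  exact List.prefix_append _ _

lemma concat_mem_subtreeD {D lam ν : List ℕ} {e : ℕ} (hν : ν ∈ subtreeD U D lam)
    (he : e ∈ D) (hνe : ν ++ [e] ∈ U) : ν ++ [e] ∈ subtreeD U D lam := by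
  obtain ⟨-, η, rfl, hη⟩ := hν
  refine ⟨hνe, η ++ [e], by simp, fun c hc => ?_⟩
  rcases List.mem_append.mp hc with hc | hc
  · exact hη c hc
  · rwa [List.mem_singleton.mp hc]

lemma not_mem_subtreeD_of_concat_prefix {d : ℕ} {D lam ν μ : List ℕ} (hd : d ∉ D)
    (hν : lam <+: ν) (h : ν ++ [d] <+: μ) : μ ∉ subtreeD U D lam := by
  rintro ⟨-, η, rfl, hη⟩
  obtain ⟨ζ, rfl⟩ := hν
  have hζη : ζ ++ [d] <+: η := by simpa using h
  exact hd (hη d (hζη.subset (by simp)))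

lemma eq_of_concat_prefix_of_mem_subtreeD {d : ℕ} {D lam ν ν' μ : List ℕ} (hd : d ∉ D)
    (hν : ν ∈ subtreeD U D lam) (hν' : ν' ∈ subtreeD U D lam)
    (h : ν ++ [d] <+: μ) (h' : ν' ++ [d] <+: μ) : ν = ν' := by
  wlog hle : ν ++ [d] <+: ν' ++ [d] generalizing ν ν'
  · exact (this hν' hν h' h ((List.prefix_or_prefix_of_prefix h h').resolve_left hle)).symm
  rcases List.prefix_concat_iff.mp hle with heq | hlt
  · exact List.append_cancel_right heq
  · exact absurd hν' (not_mem_subtreeD_of_concat_prefix hd (prefix_of_mem_subtreeD hν) hlt)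

lemma mem_subtreeD_cons (hU : ∀ l ∈ U, ∀ p : List ℕ, p <+: l → p ∈ U) {d : ℕ}
    {D lam μ : List ℕ} (hμ : μ ∈ subtreeD U (d :: D) lam) :
    μ ∈ subtreeD U D lam ∨
      ∃ ν ∈ subtreeD U D lam, ν ++ [d] ∈ U ∧
        μ ∈ subtreeD U (D ++ [d]) (ν ++ [d]) := by
  obtain ⟨hμU, η, rfl, hη⟩ := hμ
  have hmem : ∀ c ∈ η, c ≠ d → c ∈ D := fun c hc hcd =>
    (List.mem_cons.mp (hη c hc)).resolve_left hcd
  by_cases hdη : d ∈ η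
  · obtain ⟨ζ, ρ, hdζ, rfl, -⟩ := List.exists_erase_eq hdη
    refine .inr ⟨lam ++ ζ, ⟨hU _ hμU _ ⟨d :: ρ, by simp⟩, ζ, rfl, fun c hc => ?_⟩,
      hU _ hμU _ ⟨ρ, by simp⟩, hμU, ρ, by simp, fun c hc => ?_⟩
    · exact hmem c (by simp [hc]) (by rintro rfl; exact hdζ hc)
    · by_cases hcd : c = d
      · simp [hcd]
      · exact List.mem_append_left _ (hmem c (by simp [hc]) hcd)
  · exact .inl ⟨hμU, η, rfl, fun c hc => hmem c hc (by rintro rfl; exact hdη hc)⟩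

lemma DExpansion.index_unique {M : List (List ℕ)} {n m d : ℕ} {ν : List ℕ}
    (hn : DExpansion U M n d ν) (hm : DExpansion U M m d ν) : n = m := by
  obtain ⟨-, μ, -, rfl, rfl⟩ := hn
  obtain ⟨-, μ', -, he, rfl⟩ := hm
  rw [List.append_cancel_right he]

lemma exists_mem_get_of_mem_flatten {α : Type*} {Ls : List (List α)} {x : α}
    (h : x ∈ Ls.flatten) : ∃ j : Fin Ls.length, x ∈ Ls.get j := by
  obtain ⟨l, hl, hx⟩ := List.mem_flatten.mp h
  obtain ⟨j, rfl⟩ := List.get_of_mem hl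
  exact ⟨j, hx⟩

lemma mem_flatten_of_mem_get {α : Type*} {Ls : List (List α)} {x : α} {j : Fin Ls.length}
    (h : x ∈ Ls.get j) : x ∈ Ls.flatten :=
  List.mem_flatten.mpr ⟨_, List.get_mem Ls j, h⟩

theorem DVisit.subset_subtreeD {D lam : List ℕ} {L : List (List ℕ)} (h : DVisit U D lam L) :
    ∀ μ ∈ L, μ ∈ subtreeD U D lam := by
  induction h with
  | base lam hlam =>
    intro μ hμ
    rw [List.mem_singleton.mp hμ]
    exact ⟨hlam, [], by simp, by simp⟩
  | step d D lam M Ls _ _ _ hexp _ _ ihM ihLs =>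
    intro μ hμ
    rcases List.mem_append.mp hμ with hμ | hμ
    · exact subtreeD_mono (List.subset_cons_self d D) (ihM μ hμ)
    · obtain ⟨j, hμj⟩ := exists_mem_get_of_mem_flatten hμ
      obtain ⟨-, ν, hνM, hhead, -⟩ := hexp j
      obtain ⟨-, ζ, rfl, hζ⟩ := ihM ν hνM
      obtain ⟨hμU, η, rfl, hη⟩ := ihLs j μ hμj
      refine ⟨hμU, ζ ++ d :: η, by rw [hhead]; simp, fun c hc => ?_⟩
      simp only [List.mem_append, List.mem_cons] at hc ⊢
      rcases hc with hc | rfl | hc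
      · exact .inr (hζ c hc)
      · exact .inl rfl
      · simpa [or_comm] using hη c hc

theorem DVisit.prefix_of_mem {D lam μ : List ℕ} {L : List (List ℕ)} (h : DVisit U D lam L)
    (hμ : μ ∈ L) : lam <+: μ :=
  prefix_of_mem_subtreeD (h.subset_subtreeD μ hμ)

section Step

variable {d : ℕ} {D lam : List ℕ} {M : List (List ℕ)} {Ls : List (List (List ℕ))}

lemma not_mem_subtreeD_of_headI_prefix (hd : d ∉ D) (hM : DVisit U D lam M)
    (hexp : ∀ j : Fin Ls.length, DExpansion U M j.1 d ((Ls.get j).headI))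
    {j : Fin Ls.length} {μ : List ℕ} (h : (Ls.get j).headI <+: μ) :
    μ ∉ subtreeD U D lam := by
  obtain ⟨-, ν, hνM, hhead, -⟩ := hexp j
  exact not_mem_subtreeD_of_concat_prefix hd (hM.prefix_of_mem hνM) (hhead ▸ h)

lemma headI_eq_of_concat_prefix (hd : d ∉ D) (hM : DVisit U D lam M)
    (hexp : ∀ j : Fin Ls.length, DExpansion U M j.1 d ((Ls.get j).headI))
    (hvis : ∀ j : Fin Ls.length, DVisit U (D ++ [d]) ((Ls.get j).headI) (Ls.get j))
    {j : Fin Ls.length} {ν μ : List ℕ} (hν : ν ∈ subtreeD U D lam) (h : ν ++ [d] <+: μ)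
    (hμ : μ ∈ Ls.get j) : (Ls.get j).headI = ν ++ [d] := by
  obtain ⟨-, ν', hν'M, hhead, -⟩ := hexp j
  have hprefix : ν' ++ [d] <+: μ := hhead ▸ (hvis j).prefix_of_mem hμ
  rw [hhead, eq_of_concat_prefix_of_mem_subtreeD hd (hM.subset_subtreeD ν' hν'M) hν hprefix h]

lemma index_eq_of_headI_prefix (hd : d ∉ D) (hM : DVisit U D lam M)
    (hexp : ∀ j : Fin Ls.length, DExpansion U M j.1 d ((Ls.get j).headI))
    (hvis : ∀ j : Fin Ls.length, DVisit U (D ++ [d]) ((Ls.get j).headI) (Ls.get j))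
    {i j : Fin Ls.length} {μ : List ℕ} (h : (Ls.get i).headI <+: μ) (hμ : μ ∈ Ls.get j) :
    i = j := by
  obtain ⟨-, ν, hνM, hhead, -⟩ := hexp i
  have hheads : (Ls.get j).headI = (Ls.get i).headI := by
    rw [hhead] at h ⊢
    exact headI_eq_of_concat_prefix hd hM hexp hvis (hM.subset_subtreeD ν hνM) h hμ
  have hexp_j := hexp j
  rw [hheads] at hexp_j
  exact Fin.ext ((hexp i).index_unique hexp_j)

lemma DComplete.left_of_step (hc : DComplete U (d :: D) (M ++ Ls.flatten)) (hd : d ∉ D)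
    (hM : DVisit U D lam M)
    (hexp : ∀ j : Fin Ls.length, DExpansion U M j.1 d ((Ls.get j).headI))
    (hvis : ∀ j : Fin Ls.length, DVisit U (D ++ [d]) ((Ls.get j).headI) (Ls.get j)) :
    DComplete U D M := by
  intro ν hν e he hνe
  refine (List.mem_append.mp (hc ν (List.mem_append_left _ hν) e
    (List.mem_cons_of_mem _ he) hνe)).resolve_right fun hf => ?_
  obtain ⟨j, hj⟩ := exists_mem_get_of_mem_flatten hf
  exact not_mem_subtreeD_of_headI_prefix hd hM hexp ((hvis j).prefix_of_mem hj)
    (concat_mem_subtreeD (hM.subset_subtreeD ν hν) he hνe)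

lemma DComplete.get_of_step (hc : DComplete U (d :: D) (M ++ Ls.flatten)) (hd : d ∉ D)
    (hM : DVisit U D lam M)
    (hexp : ∀ j : Fin Ls.length, DExpansion U M j.1 d ((Ls.get j).headI))
    (hvis : ∀ j : Fin Ls.length, DVisit U (D ++ [d]) ((Ls.get j).headI) (Ls.get j))
    (j : Fin Ls.length) : DComplete U (D ++ [d]) (Ls.get j) := by
  intro ν hν e he hνe
  have hprefix : (Ls.get j).headI <+: ν ++ [e] :=
    ((hvis j).prefix_of_mem hν).trans (List.prefix_append _ _)
  have he' : e ∈ d :: D := by simpa [or_comm] using he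
  rcases List.mem_append.mp
      (hc ν (List.mem_append_right _ (mem_flatten_of_mem_get hν)) e he' hνe) with hνeM | hνe
  · exact absurd (hM.subset_subtreeD _ hνeM)
      (not_mem_subtreeD_of_headI_prefix hd hM hexp hprefix)
  · obtain ⟨j', hj'⟩ := exists_mem_get_of_mem_flatten hνe
    rwa [index_eq_of_headI_prefix hd hM hexp hvis hprefix hj']

end Step

theorem DVisit.nodup {D lam : List ℕ} {L : List (List ℕ)} (h : DVisit U D lam L)
    (hD : D.Nodup) : L.Nodup := by
  induction h with
  | base => exact List.nodup_singleton _
  | step d D lam M Ls hM _ _ hexp hvis _ ihM ihLs =>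
    have hd : d ∉ D := (List.nodup_cons.mp hD).1
    have hDd : (D ++ [d]).Nodup := List.nodup_append_comm.mpr hD
    refine List.nodup_append.mpr ⟨ihM (List.nodup_cons.mp hD).2,
      List.nodup_flatten.mpr ⟨?_, ?_⟩, ?_⟩
    · intro l hl
      obtain ⟨j, rfl⟩ := List.get_of_mem hl
      exact ihLs j hDd
    · refine List.pairwise_iff_get.mpr fun i j hij μ hμi hμj => (Fin.ne_of_lt hij) ?_
      exact index_eq_of_headI_prefix hd hM hexp hvis ((hvis i).prefix_of_mem hμi) hμj
    · rintro μ hμM _ hμ rfl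
      obtain ⟨j, hμj⟩ := exists_mem_get_of_mem_flatten hμ
      exact not_mem_subtreeD_of_headI_prefix hd hM hexp ((hvis j).prefix_of_mem hμj)
        (hM.subset_subtreeD μ hμM)

theorem DVisit.subtreeD_subset_of_complete (hU : ∀ l ∈ U, ∀ p : List ℕ, p <+: l → p ∈ U)
    {D lam : List ℕ} {L : List (List ℕ)} (h : DVisit U D lam L) (hD : D.Nodup)
    (hc : DComplete U D L) : ∀ μ ∈ subtreeD U D lam, μ ∈ L := by
  induction h with
  | base lam _ =>
    rintro μ ⟨-, η, rfl, hη⟩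
    obtain rfl : η = [] := List.eq_nil_iff_forall_not_mem.mpr fun c hc => by simpa using hη c hc
    simp
  | step d D lam M Ls hM _ _ hexp hvis _ ihM ihLs =>
    have hd : d ∉ D := (List.nodup_cons.mp hD).1
    have hDd : (D ++ [d]).Nodup := List.nodup_append_comm.mpr hD
    have hMc := hc.left_of_step hd hM hexp hvis
    have hLc := hc.get_of_step hd hM hexp hvis
    intro μ hμ
    rcases mem_subtreeD_cons hU hμ with hμ | ⟨ν, hν, hνd, hμ⟩
    · exact List.mem_append_left _ (ihM (List.nodup_cons.mp hD).2 hMc μ hμ)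
    · have hνM := ihM (List.nodup_cons.mp hD).2 hMc ν hν
      rcases List.mem_append.mp (hc ν (List.mem_append_left _ hνM) d List.mem_cons_self hνd)
        with hνdM | hνd
      · exact absurd (hM.subset_subtreeD _ hνdM)
          (not_mem_subtreeD_of_concat_prefix hd (prefix_of_mem_subtreeD hν) (List.prefix_refl _))
      · obtain ⟨j, hj⟩ := exists_mem_get_of_mem_flatten hνd
        rw [← headI_eq_of_concat_prefix hd hM hexp hvis hν (List.prefix_refl _) hj] at hμ
        exact List.mem_append_right _ (mem_flatten_of_mem_get (ihLs j hDd (hLc j) μ hμ))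

theorem dvisit_complete_maximal_general (k : ℕ) (U : Set (List ℕ)) (hU : IsKTree k U)
    (D : List ℕ) (hDnd : D.Nodup)
    (lam : List ℕ)
    (L L' : List (List ℕ)) (hL : DVisit U D lam L) (hL' : DVisit U D lam L')
    (hpre : L <+: L') (hcom : DComplete U D L) :
    L = L' := by
  obtain ⟨t, rfl⟩ := hpre
  obtain _ | ⟨μ, t⟩ := t
  · exact (List.append_nil L).symm
  · have hμL : μ ∈ L := hL.subtreeD_subset_of_complete hU.2.1 hDnd hcom μ
      (hL'.subset_subtreeD μ (by simp))
    exact absurd rfl ((List.nodup_append.mp (hL'.nodup hDnd)).2.2 μ hμL μ List.mem_cons_self)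

/-- a D-complete D-visit is maximal among D-visits from lam w.r.t. prefix. -/
theorem dvisit_complete_maximal (k : ℕ) (U : Set (List ℕ)) (hU : IsKTree k U)
    (D : List ℕ) (hDnd : D.Nodup) (hDk : ∀ d ∈ D, d < k)
    (lam : List ℕ) (hlam : lam ∈ U)
    (L L' : List (List ℕ)) (hL : DVisit U D lam L) (hL' : DVisit U D lam L')
    (hpre : L <+: L') (hcom : DComplete U D L) :
    L = L' :=
  dvisit_complete_maximal_general k U hU D hDnd lam L L' hL hL' hpre hcom
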